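/- arXiv:1407.7521 — 3 statements merged into one kernel-verified Lean document; each statement's English description precedes it below -/
import Mathlib

section
/- Let p be a prime, n an arbitrary integer (possibly negative), and k a nonnegative integer. Then the p-adic valuation of the binomial coefficient C(n, k) equals the number of carries when adding k and n - k in base p (interpreted via the p-adic digit expansions; infinitely many carries corresponds to the binomial coefficient being zero). -/
/-!
Outside the range `0 ≤ n < k`, `C(n, k)` is up to sign an ordinary binomial coefficient
`C(m + k, k)`: take `m = n - k` when `n ≥ k`, and use `C(-m - 1, k) = ±C(m + k, k)` when `n < 0`.
In the latter case `n - k = -(k + m) - 1`, and adding `k` to this complement of `k + m` carries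
out of position `i` exactly when adding `k` and `m` does, because a carry out of position `i` means
that the residue of the sum modulo `p ^ (i + 1)` drops below that of `k`. Kummer's theorem for
natural numbers then applies. For `0 ≤ n < k` we have `C(n, k) = 0`, and every position `i ≥ k`
carries since `-k ≤ n - k < 0`.
-/

/-- A carry occurs out of position `i` (into position `i + 1`) when adding the
integers `a` and `b` (given via their `p`-adic digit expansions) in base `p`,
if and only if the sum of their residues modulo `p^(i+1)` is at least `p^(i+1)`. -/
def carryAt (p : ℕ) (a b : ℤ) (i : ℕ) : Prop :=
  (p : ℤ) ^ (i + 1) ≤ a % (p : ℤ) ^ (i + 1) + b % (p : ℤ) ^ (i + 1)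

theorem Int.neg_sub_one_emod (x : ℤ) {q : ℤ} (hq : 0 < q) : (-x - 1) % q = q - 1 - x % q := by
  have h0 := Int.emod_nonneg x hq.ne'
  have h1 := Int.emod_lt_of_pos x hq
  calc (-x - 1) % q = (q - 1 - x % q + q * (-(x / q) - 1)) % q := by
        congr 1; linear_combination Int.emod_add_mul_ediv x q
    _ = q - 1 - x % q := by
        rw [Int.add_mul_emod_self_left, Int.emod_eq_of_lt (by omega) (by omega)]

theorem Int.add_emod_lt_iff {q : ℤ} (hq : 0 < q) (a b : ℤ) :
    (a + b) % q < a % q ↔ q ≤ a % q + b % q := by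
  have ha0 := Int.emod_nonneg a hq.ne'
  have ha := Int.emod_lt_of_pos a hq
  have hb0 := Int.emod_nonneg b hq.ne'
  have hb := Int.emod_lt_of_pos b hq
  rw [Int.add_emod]
  rcases lt_or_ge (a % q + b % q) q with h | h
  · rw [Int.emod_eq_of_lt (by omega) h]; omega
  · rw [← Int.sub_emod_right, Int.emod_eq_of_lt (by omega) (by omega)]; omega

theorem carryAt_neg_sub_one_iff {p : ℕ} (hp : 0 < p) (a b : ℤ) (i : ℕ) :
    carryAt p a (-(a + b) - 1) i ↔ carryAt p a b i := by
  have hq : (0 : ℤ) < (p : ℤ) ^ (i + 1) := by positivity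
  rw [carryAt, carryAt, Int.neg_sub_one_emod _ hq, ← Int.add_emod_lt_iff hq]
  omega

theorem carryAt_of_neg_le {p : ℕ} {a b : ℤ} {i : ℕ} (ha : 0 ≤ a) (hap : a < (p : ℤ) ^ (i + 1))
    (hab : -a ≤ b) (hb : b < 0) : carryAt p a b i := by
  rw [carryAt, Int.emod_eq_of_lt ha hap, ← Int.add_emod_right,
    Int.emod_eq_of_lt (by omega) (by omega)]
  omega

theorem carryAt_natCast_iff (p a b i : ℕ) :
    carryAt p a b i ↔ p ^ (i + 1) ≤ a % p ^ (i + 1) + b % p ^ (i + 1) := by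
  rw [carryAt]; exact_mod_cast Iff.rfl

theorem setOf_carryAt_natCast_eq_preimage {p : ℕ} (hp : 1 < p) (k n : ℕ) :
    {i | carryAt p k n i} = (· + 1) ⁻¹'
      ↑{i ∈ Finset.Ico 1 (Nat.log p (n + k) + 1) | p ^ i ≤ k % p ^ i + n % p ^ i} := by
  ext i
  simp only [Set.mem_ofPred_eq, Set.mem_preimage, Finset.coe_filter, Finset.mem_Ico,
    carryAt_natCast_iff]
  refine ⟨fun h => ⟨⟨le_add_self, Nat.lt_succ_of_le (Nat.le_log_of_pow_le hp ?_)⟩, h⟩, And.right⟩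
  calc p ^ (i + 1) ≤ k % p ^ (i + 1) + n % p ^ (i + 1) := h
    _ ≤ n + k := by rw [add_comm]; exact add_le_add (Nat.mod_le _ _) (Nat.mod_le _ _)

theorem finite_setOf_carryAt_natCast {p : ℕ} (hp : 1 < p) (k n : ℕ) :
    {i | carryAt p k n i}.Finite := by
  rw [setOf_carryAt_natCast_eq_preimage hp]
  exact (Finset.finite_toSet _).preimage (add_left_injective 1).injOn

theorem padicValNat_choose_eq_ncard_setOf_carryAt {p : ℕ} [hp : Fact p.Prime] (k n : ℕ) :
    padicValNat p ((n + k).choose k) = {i | carryAt p k n i}.ncard := by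
  rw [padicValNat_choose' (Nat.lt_succ_self _), setOf_carryAt_natCast_eq_preimage hp.out.one_lt,
    Set.ncard_preimage_of_injective_subset_range (add_left_injective 1), Set.ncard_coe_finset]
  intro j hj
  simp only [Finset.coe_filter, Finset.mem_Ico, Set.mem_ofPred_eq] at hj
  exact ⟨j - 1, Nat.sub_add_cancel hj.1.1⟩

theorem Int.ringChoose_eq_zero_of_lt {n : ℤ} {k : ℕ} (hn : 0 ≤ n) (hnk : n < k) :
    Ring.choose n k = 0 := by
  lift n to ℕ using hn
  rw [Ring.choose_natCast, Nat.choose_eq_zero_of_lt (by exact_mod_cast hnk), Nat.cast_zero]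

theorem infinite_setOf_carryAt_sub_of_lt {p : ℕ} (hp : 1 < p) {n : ℤ} {k : ℕ} (hn : 0 ≤ n)
    (hnk : n < k) : {i | carryAt p k (n - k) i}.Infinite := by
  refine (Set.Ici_infinite k).mono fun i (hi : k ≤ i) => carryAt_of_neg_le (by positivity) ?_
    (by omega) (by omega)
  exact_mod_cast (Nat.lt_succ_of_le hi).trans (Nat.lt_pow_self hp)

theorem Int.natAbs_ringChoose_neg_sub_one (m k : ℕ) :
    (Ring.choose (-(m : ℤ) - 1) k).natAbs = (m + k).choose k := by
  rw [neg_sub_left, Ring.choose_neg, Units.smul_def, smul_eq_mul, Int.natAbs_mul,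
    Int.isUnit_iff_natAbs_eq.mp (Units.isUnit _), one_mul,
    show 1 + (m : ℤ) + k - 1 = ((m + k : ℕ) : ℤ) by push_cast; ring, Ring.choose_natCast,
    Int.natAbs_natCast]

theorem exists_natAbs_ringChoose_eq_and_carryAt_iff {p : ℕ} (hp : 0 < p) {n : ℤ} {k : ℕ}
    (h : n < 0 ∨ k ≤ n) : ∃ m : ℕ, (Ring.choose n k).natAbs = (m + k).choose k ∧
      ∀ i, carryAt p k (n - k) i ↔ carryAt p k m i := by
  rcases h with hn | hkn
  · lift -n - 1 to ℕ using (by omega) with m hm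
    obtain rfl : n = -(m : ℤ) - 1 := by omega
    refine ⟨m, Int.natAbs_ringChoose_neg_sub_one m k, fun i => ?_⟩
    rw [show -(m : ℤ) - 1 - k = -(k + m) - 1 by ring, carryAt_neg_sub_one_iff hp]
  · lift n - k to ℕ using (by omega) with m hm
    obtain rfl : n = ((m + k : ℕ) : ℤ) := by push_cast; omega
    exact ⟨m, by rw [Ring.choose_natCast, Int.natAbs_natCast], fun _ => Iff.rfl⟩

/-- **Kummer's theorem for generalized binomial coefficients.**  For a prime `p`,
an arbitrary integer `n` and a natural number `k`, the `p`-adic valuation of the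
binomial coefficient `C(n, k)` equals the number of carries when adding `k` and
`n - k` in base `p`; infinitely many carries corresponds to `C(n, k) = 0`. -/
theorem kummer_int_binomial (p : ℕ) (hp : p.Prime) (n : ℤ) (k : ℕ) :
    (Ring.choose n k = 0 ↔ {i : ℕ | carryAt p (k : ℤ) (n - (k : ℤ)) i}.Infinite) ∧
    ∀ hfin : {i : ℕ | carryAt p (k : ℤ) (n - (k : ℤ)) i}.Finite,
      padicValInt p (Ring.choose n k) = hfin.toFinset.card := by
  have := Fact.mk hp
  by_cases hnk : 0 ≤ n ∧ n < k
  · have hinf := infinite_setOf_carryAt_sub_of_lt hp.one_lt hnk.1 hnk.2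
    exact ⟨iff_of_true (Int.ringChoose_eq_zero_of_lt hnk.1 hnk.2) hinf,
      fun hfin => absurd hfin hinf⟩
  obtain ⟨m, hchoose, hcarry⟩ :=
    exists_natAbs_ringChoose_eq_and_carryAt_iff hp.pos (n := n) (k := k) (by omega)
  have hset : {i | carryAt p k (n - k) i} = {i | carryAt p k m i} := Set.ext hcarry
  have hne : Ring.choose n k ≠ 0 := by
    rw [← Int.natAbs_ne_zero, hchoose]
    exact (Nat.choose_pos le_add_self).ne'
  have hfin := hset ▸ finite_setOf_carryAt_natCast hp.one_lt k m
  refine ⟨iff_of_false hne hfin.not_infinite, fun hfin => ?_⟩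
  rw [padicValInt, hchoose, padicValNat_choose_eq_ncard_setOf_carryAt, ← hset,
    Set.ncard_eq_toFinset_card _ hfin]
end

section
/- Let p be a prime, a an integer, and i ∈ {0,1,...,p-1}. If j is an integer with 0 < j < p - i, then for all positive integers m and λ, the binomial coefficient C(p·a + i, p^λ·m - j) is congruent to 0 modulo p^λ. -/
/-!
Kummer's theorem: `p ^ λ ∣ C(s + k, k)` as soon as adding `s` and `k` in base `p` carries at each
of the positions `1, …, λ`. Here `k = p^λ m - j ≡ -j (mod p^λ)`, so `k % p^t = p^t - j` for
`t ≤ λ`, and it suffices that the last digit of `s` is at least `j`. For a nonnegative upper index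
`r` take `s = r - k`, whose last digit is `i + j`; for a negative one, `C(r, k) = ± C(s + k, k)`
with `s = -r - 1`, whose last digit is `p - 1 - i ≥ j`.
-/

open Finset

theorem Nat.Prime.pow_dvd_choose_add_of_carries {p s k lam : ℕ} (hp : p.Prime)
    (hcarry : ∀ t ∈ Icc 1 lam, p ^ t ≤ k % p ^ t + s % p ^ t) :
    p ^ lam ∣ (s + k).choose k := by
  set b := max (Nat.log p (s + k) + 1) (lam + 1)
  apply pow_dvd_of_le_emultiplicity
  rw [hp.emultiplicity_choose' (b := b) (by omega)]
  have hsub : Icc 1 lam ⊆ {t ∈ Ico 1 b | p ^ t ≤ k % p ^ t + s % p ^ t} := fun t ht => by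
    have := mem_Icc.mp ht
    exact mem_filter.mpr ⟨mem_Ico.mpr ⟨this.1, by omega⟩, hcarry t ht⟩
  simpa using card_le_card hsub

theorem Nat.mod_eq_sub_of_dvd_add {n k j : ℕ} (hj0 : 0 < j) (hjn : j ≤ n) (h : n ∣ k + j) :
    k % n = n - j := by
  obtain ⟨c, hc⟩ := h
  obtain ⟨c, rfl⟩ : ∃ c', c = c' + 1 := ⟨c - 1, by rcases c with _ | c <;> simp_all⟩
  have hk : k = n - j + n * c := by rw [Nat.mul_succ] at hc; omega
  rw [hk, Nat.add_mul_mod_self_left, Nat.mod_eq_of_lt (by omega)]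

theorem Nat.Prime.pow_dvd_choose_add_of_le_mod {p s k j lam : ℕ} (hp : p.Prime) (hj0 : 0 < j)
    (hjs : j ≤ s % p) (hkj : p ^ lam ∣ k + j) : p ^ lam ∣ (s + k).choose k := by
  refine hp.pow_dvd_choose_add_of_carries fun t ht => ?_
  obtain ⟨ht1, htl⟩ := mem_Icc.mp ht
  have hsp : s % p < p := Nat.mod_lt s hp.pos
  have hpt : p ≤ p ^ t := Nat.le_self_pow (by omega) p
  have hk : k % p ^ t = p ^ t - j :=
    Nat.mod_eq_sub_of_dvd_add hj0 (by omega : j ≤ p ^ t) ((pow_dvd_pow p htl).trans hkj)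
  have hs : s % p ≤ s % p ^ t := by
    rw [← Nat.mod_mod_of_dvd s (dvd_pow_self p (by omega : t ≠ 0))]
    exact Nat.mod_le _ _
  omega

theorem Int.natCast_mod_eq_of_modEq {s p : ℕ} {c : ℤ} (hc0 : 0 ≤ c) (hcp : c < p)
    (hs : (s : ℤ) ≡ c [ZMOD p]) : ((s % p : ℕ) : ℤ) = c := by
  rw [Int.natCast_mod, hs.eq, Int.emod_eq_of_lt hc0 hcp]

theorem Nat.Prime.pow_dvd_ringChoose_of_emod_add_lt {p k j lam : ℕ} {r : ℤ} (hp : p.Prime)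
    (hj0 : 0 < j) (hr : r % p + j < p) (hkj : p ^ lam ∣ k + j) :
    (p : ℤ) ^ lam ∣ Ring.choose r k := by
  rcases lam.eq_zero_or_pos with rfl | hlam
  · exact pow_zero (p : ℤ) ▸ one_dvd _
  have hpkj : (p : ℤ) ∣ k + j := by exact_mod_cast (dvd_pow_self p hlam.ne').trans hkj
  have hrp : 0 ≤ r % p := Int.emod_nonneg r (by exact_mod_cast hp.ne_zero)
  rcases le_or_gt 0 r with hr0 | hr0
  · lift r to ℕ using hr0 with n
    rw [Ring.choose_natCast]
    rcases lt_or_ge n k with hnk | hkn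
    · simp [Nat.choose_eq_zero_of_lt hnk]
    obtain ⟨s, rfl⟩ := Nat.exists_eq_add_of_le' hkn
    have hs : (s : ℤ) ≡ (s + k : ℕ) % p + j [ZMOD p] := by
      rw [Int.modEq_iff_dvd, Int.emod_def, Nat.cast_add]
      rw [show (s + k : ℤ) - p * ((s + k) / p) + j - s = k + j - p * ((s + k) / p) by ring]
      exact hpkj.sub (dvd_mul_right _ _)
    have hsp := Int.natCast_mod_eq_of_modEq (by omega) hr hs
    exact Int.natCast_dvd_natCast.mpr (hp.pow_dvd_choose_add_of_le_mod hj0 (by omega) hkj)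
  · obtain ⟨s, rfl⟩ : ∃ s : ℕ, r = -(s + 1 : ℕ) := ⟨(-r - 1).toNat, by omega⟩
    have hs : (s : ℤ) ≡ p - 1 - (-(s + 1 : ℕ) : ℤ) % p [ZMOD p] := by
      rw [Int.modEq_iff_dvd, Int.emod_def]
      exact ⟨1 + -(s + 1 : ℕ) / p, by push_cast; ring⟩
    have hsp := Int.natCast_mod_eq_of_modEq (by omega) (by omega) hs
    have hsk : ((s + 1 : ℕ) : ℤ) + k - 1 = (s + k : ℕ) := by push_cast; ring
    rw [Ring.choose_neg, hsk, Ring.choose_natCast, Units.smul_def]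
    exact (Int.natCast_dvd_natCast.mpr
      (hp.pow_dvd_choose_add_of_le_mod hj0 (by omega) hkj)).mul_left _

theorem binom_padic_lemma_general (p : ℕ) (hp : p.Prime) (a : ℤ) (i j : ℕ)
    (hj0 : 0 < j) (hj : j < p - i) (m lam : ℕ)
    (hm : 0 < m) (hlam : 0 < lam) :
    (p : ℤ) ^ lam ∣ Ring.choose ((p : ℤ) * a + (i : ℤ)) (p ^ lam * m - j) := by
  have hjm : j ≤ p ^ lam * m :=
    calc j ≤ p := by omega
      _ ≤ p ^ lam * m := (Nat.le_mul_of_pos_right _ hm).trans' (Nat.le_self_pow hlam.ne' p)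
  refine hp.pow_dvd_ringChoose_of_emod_add_lt hj0 ?_ ⟨m, by omega⟩
  rw [Int.mul_add_emod_self_left, Int.emod_eq_of_lt (by omega) (by omega)]
  omega

/-- Lemma 3.3 of Straub: for a prime `p`, an integer `a`, `i ∈ {0, ..., p-1}` and an
integer `j` with `0 < j < p - i`, the binomial coefficient `C(p·a + i, p^λ·m - j)`
(with possibly negative upper index) is divisible by `p^λ` for all positive `m, λ`. -/
theorem binom_padic_lemma (p : ℕ) (hp : p.Prime) (a : ℤ) (i j : ℕ)
    (hi : i ≤ p - 1) (hj0 : 0 < j) (hj : j < p - i) (m lam : ℕ)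
    (hm : 0 < m) (hlam : 0 < lam) :
    (p : ℤ) ^ lam ∣ Ring.choose ((p : ℤ) * a + (i : ℤ)) (p ^ lam * m - j) :=
  binom_padic_lemma_general p hp a i j hj0 hj m lam hm hlam
end

section
/- Let p be a prime. For any integers n and k with k > 0 and p not dividing k, the binomial coefficient C(p^λ·n, k) is congruent to 0 modulo p^λ for every positive integer λ. -/
namespace Ring

variable {R : Type*} [CommRing R] [BinomialRing R]

theorem nsmul_choose_eq_mul_choose_sub_one (r : R) {k : ℕ} (hk : k ≠ 0) :
    k • choose r k = r * choose (r - 1) (k - 1) := by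
  simpa using choose_smul_choose r (Nat.one_le_iff_ne_zero.2 hk)

theorem dvd_choose_of_dvd_of_isCoprime {a r : R} {k : ℕ} (hk : k ≠ 0) (har : a ∣ r)
    (hak : IsCoprime a k) : a ∣ choose r k := by
  have h : a ∣ choose r k * k := by
    rw [mul_comm, ← nsmul_eq_mul, nsmul_choose_eq_mul_choose_sub_one r hk]
    exact har.mul_right _
  exact hak.dvd_of_dvd_mul_right h

end Ring

theorem binom_pow_mul_dvd_general (p : ℕ) (hp : p.Prime) (n : ℤ) (k : ℕ)
    (hk : ¬ p ∣ k) (lam : ℕ) :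
    (p : ℤ) ^ lam ∣ Ring.choose ((p : ℤ) ^ lam * n) k := by
  have hk0 : k ≠ 0 := by rintro rfl; exact hk (dvd_zero p)
  have hcop : IsCoprime ((p : ℤ) ^ lam) (k : ℤ) :=
    (Nat.isCoprime_iff_coprime.2 (hp.coprime_iff_not_dvd.2 hk)).pow_left
  exact Ring.dvd_choose_of_dvd_of_isCoprime hk0 (dvd_mul_right _ _) hcop

/-- For a prime `p`, integers `n` and `k` with `k > 0` and `p ∤ k`, the binomial
coefficient `C(p^λ·n, k)` (with possibly negative upper index) is divisible by
`p^λ` for every positive integer `λ`. -/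
theorem binom_pow_mul_dvd (p : ℕ) (hp : p.Prime) (n : ℤ) (k : ℕ) (hk0 : 0 < k)
    (hk : ¬ p ∣ k) (lam : ℕ) (hlam : 0 < lam) :
    (p : ℤ) ^ lam ∣ Ring.choose ((p : ℤ) ^ lam * n) k :=
  binom_pow_mul_dvd_general p hp n k hk lam
end
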